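/- p-entailment over the symmetric matrix is not reflexive: there is a formula α (any propositional variable) with α ⊭^p α, witnessed by a valuation assigning α the value ⊤. -/

import Mathlib

/-- The four truth-values of Dunn-Belnap logic. -/
inductive Four where
  | f | bot | top | t
deriving DecidableEq, Repr

namespace Four

/-- Whether the value contains the classical value T. -/
def hasT : Four → Bool
  | t => true | top => true | _ => false

/-- Whether the value contains the classical value F. -/
def hasF : Four → Bool
  | f => true | top => true | _ => false

/-- Build a value from its T-part and F-part. -/
def mk : Bool → Bool → Four
  | true, true => top
  | true, false => t
  | false, true => f
  | false, false => bot

/-- Logical order: x ≤_t y iff x∩{T} ⊆ y∩{T} and y∩{F} ⊆ x∩{F}. -/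
def leT (x y : Four) : Prop :=
  (x.hasT = true → y.hasT = true) ∧ (y.hasF = true → x.hasF = true)

/-- Information order: x ≤_i y iff x ⊆ y. -/
def leI (x y : Four) : Prop :=
  (x.hasT = true → y.hasT = true) ∧ (x.hasF = true → y.hasF = true)

/-- Negation: swaps T and F membership. -/
def negT (x : Four) : Four := mk x.hasF x.hasT

/-- Infimum w.r.t. the logical order. -/
def meetT (x y : Four) : Four := mk (x.hasT && y.hasT) (x.hasF || y.hasF)

/-- Supremum w.r.t. the logical order. -/
def joinT (x y : Four) : Four := mk (x.hasT || y.hasT) (x.hasF && y.hasF)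

/-- Infimum w.r.t. the information order. -/
def meetI (x y : Four) : Four := mk (x.hasT && y.hasT) (x.hasF && y.hasF)

/-- Supremum w.r.t. the information order. -/
def joinI (x y : Four) : Four := mk (x.hasT || y.hasT) (x.hasF || y.hasF)

/-- Acceptance: designated set Y = {⊤, t}. -/
def acc (x : Four) : Prop := x = top ∨ x = t

/-- Rejection: set N = {f, ⊤}. -/
def rej (x : Four) : Prop := x = f ∨ x = top

end Four

/-- Formulas of the language S: propositional variables, ¬, ∧, ∨. -/
inductive Form where
  | var : ℕ → Form
  | neg : Form → Form
  | conj : Form → Form → Form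
  | disj : Form → Form → Form
deriving DecidableEq

/-- A valuation (agent) is determined by its values on variables; it is
extended homomorphically to all formulas. -/
def Form.eval (v : ℕ → Four) : Form → Four
  | var n => v n
  | neg φ => (φ.eval v).negT
  | conj φ ψ => (φ.eval v).meetT (ψ.eval v)
  | disj φ ψ => (φ.eval v).joinT (ψ.eval v)

open Four Form

/-- Truth-preserving (Tarskian) entailment ⊨ᵗ = ⊨⁴. -/
def entT (Γ : Set Form) (α : Form) : Prop :=
  ¬ ∃ v : ℕ → Four, (∀ γ ∈ Γ, acc (γ.eval v)) ∧ ¬ acc (α.eval v)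

/-- Falsity entailment ⊨ᶠ: no valuation not-rejects all premises while rejecting the conclusion. -/
def entF (Γ : Set Form) (α : Form) : Prop :=
  ¬ ∃ v : ℕ → Four, (∀ γ ∈ Γ, ¬ rej (γ.eval v)) ∧ rej (α.eval v)

/-- q-entailment: no valuation not-rejects all premises while not-accepting the conclusion. -/
def entQ (Γ : Set Form) (α : Form) : Prop :=
  ¬ ∃ v : ℕ → Four, (∀ γ ∈ Γ, ¬ rej (γ.eval v)) ∧ ¬ acc (α.eval v)

/-- p-entailment: no valuation accepts all premises while rejecting the conclusion. -/
def entP (Γ : Set Form) (α : Form) : Prop :=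
  ¬ ∃ v : ℕ → Four, (∀ γ ∈ Γ, acc (γ.eval v)) ∧ rej (α.eval v)

/-- B-entailment (Γ | Ψ ⊨ Φ | Δ): no valuation accepts all of Γ,
not-accepts all of Δ, rejects all of Φ and not-rejects all of Ψ. -/
def Bent (Γ Ψ Φ Δ : Set Form) : Prop :=
  ¬ ∃ v : ℕ → Four,
    (∀ γ ∈ Γ, acc (γ.eval v)) ∧ (∀ δ ∈ Δ, ¬ acc (δ.eval v)) ∧
    (∀ φ ∈ Φ, rej (φ.eval v)) ∧ (∀ ψ ∈ Ψ, ¬ rej (ψ.eval v))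

theorem Form.eval_const_top (φ : Form) : φ.eval (fun _ => top) = top := by
  induction φ with
  | var => rfl
  | neg φ ih => simp only [Form.eval, ih]; rfl
  | conj φ ψ ihφ ihψ => simp only [Form.eval, ihφ, ihψ]; rfl
  | disj φ ψ ihφ ihψ => simp only [Form.eval, ihφ, ihψ]; rfl

/-- The constant-⊤ valuation is a counter-model to everything, since ⊤ is both accepted
and rejected. -/
theorem not_entP (Γ : Set Form) (α : Form) : ¬ entP Γ α := fun h =>
  h ⟨fun _ => top, fun γ _ => by rw [γ.eval_const_top]; exact Or.inl rfl,
    by rw [α.eval_const_top]; exact Or.inr rfl⟩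

/-- p-entailment is not reflexive: α ⊭^p α for any propositional
variable α, witnessed by a valuation assigning α the value ⊤. -/
theorem entP_not_reflexive (n : ℕ) :
    ¬ entP {Form.var n} (Form.var n) ∧
    (∃ v : ℕ → Four, v n = Four.top ∧
      acc ((Form.var n).eval v) ∧ rej ((Form.var n).eval v)) :=
  ⟨not_entP _ _, fun _ => top, rfl, Or.inl rfl, Or.inr rfl⟩
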